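/- arXiv:2101.12493 — 5 statements merged into one kernel-verified Lean document; each statement's English description precedes it below -/
import Mathlib

section
/- Consider a decoupled system with block-diagonal A = blockdiag(A₁,…,A_N), P = blockdiag(P₁,…,P_N) (each Pᵢ symmetric positive definite), sensor output matrices Cᵢ = [0 … C_{i0} … 0], noise covariances Rᵢ ≻ 0, and process-noise covariance Q. For each power allocation u from a finite action set, let γ(u) = (γ₁(u),…,γ_N(u)) be a {0,1}-valued random vector with marginals pᵢ(u) = E[γᵢ(u)], and define the one-step-ahead expected cost C(P,u) = E[Tr(A (P⁻¹ + Σᵢ γᵢ(u) Cᵢᵀ Rᵢ⁻¹ Cᵢ)⁻¹ Aᵀ)] + Tr(Q) + μ Σᵢ [u]ᵢ with μ ≥ 0. Then for any two actions u and v, C(P,u) < C(P,v) if and only if Σᵢ ψᵢ(Pᵢ) pᵢ(u) − μ Σᵢ [u]ᵢ > Σᵢ ψᵢ(Pᵢ) pᵢ(v) − μ Σᵢ [v]ᵢ, where ψᵢ(Pᵢ) = Tr(Aᵢ Pᵢ C_{i0}ᵀ (C_{i0} Pᵢ C_{i0}ᵀ + Rᵢ)⁻¹ C_{i0} Pᵢ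 Aᵢᵀ). -/
open Matrix MeasureTheory

/-!
Since `A`, `P` and every `Cᵢᵀ Rᵢ⁻¹ Cᵢ` are block diagonal, so is the posterior information matrix
`P⁻¹ + Σᵢ γᵢ Cᵢᵀ Rᵢ⁻¹ Cᵢ`, and its inverse is computed block by block. On block `i` the
Woodbury identity gives
`(Pᵢ⁻¹ + γᵢ C_{i0}ᵀ Rᵢ⁻¹ C_{i0})⁻¹ = Pᵢ - γᵢ Pᵢ C_{i0}ᵀ (C_{i0} Pᵢ C_{i0}ᵀ + Rᵢ)⁻¹ C_{i0} Pᵢ`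
because `γᵢ ∈ {0, 1}`. Hence the trace inside the expectation is the affine function
`Σᵢ Tr(Aᵢ Pᵢ Aᵢᵀ) - Σᵢ γᵢ ψᵢ(Pᵢ)` of `γ`, whose expectation is `Σᵢ Tr(Aᵢ Pᵢ Aᵢᵀ) - Σᵢ ψᵢ(Pᵢ) pᵢ`.
The cost is therefore a constant minus `Σᵢ ψᵢ(Pᵢ) pᵢ(u) - μ Σᵢ [u]ᵢ`.
-/

namespace Matrix

theorem inv_add_mul_inv_mul_eq_sub {α : Type*} [CommRing α] {n m : Type*} [Fintype n]
    [DecidableEq n] [Fintype m] [DecidableEq m] {P : Matrix n n α} {R : Matrix m m α}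
    (B : Matrix n m α) (C : Matrix m n α) (hP : IsUnit P) (hR : IsUnit R) (hS : IsUnit (C * P * B + R)) :
    (P⁻¹ + B * R⁻¹ * C)⁻¹ = P - P * B * (C * P * B + R)⁻¹ * C * P := by
  have hPinv : P⁻¹⁻¹ = P := nonsing_inv_nonsing_inv _ ((isUnit_iff_isUnit_det _).1 hP)
  have hRinv : R⁻¹⁻¹ = R := nonsing_inv_nonsing_inv _ ((isUnit_iff_isUnit_det _).1 hR)
  have hS' : IsUnit (R⁻¹⁻¹ + C * P⁻¹⁻¹ * B) := by rwa [hPinv, hRinv, add_comm]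
  rw [add_mul_mul_inv_eq_sub _ _ _ _ (isUnit_nonsing_inv_iff.2 hP) (isUnit_nonsing_inv_iff.2 hR)
    hS', hPinv, hRinv, add_comm R]

theorem PosDef.inv_add_smul_transpose_mul_inv_mul {n m : Type*} [Fintype n] [DecidableEq n]
    [Fintype m] [DecidableEq m] {P : Matrix n n ℝ} {R : Matrix m m ℝ} (hP : P.PosDef)
    (hR : R.PosDef) (C : Matrix m n ℝ) {g : ℝ} (hg : g = 0 ∨ g = 1) :
    (P⁻¹ + g • (Cᵀ * R⁻¹ * C))⁻¹ = P - g • (P * Cᵀ * (C * P * Cᵀ + R)⁻¹ * C * P) := by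
  rcases hg with rfl | rfl
  · simpa using nonsing_inv_nonsing_inv _ ((isUnit_iff_isUnit_det _).1 hP.isUnit)
  · have hS : (C * P * Cᵀ + R).PosDef := by
      refine PosDef.posSemidef_add ?_ hR
      simpa using hP.posSemidef.mul_mul_conjTranspose_same C
    simpa using inv_add_mul_inv_mul_eq_sub Cᵀ C hP.isUnit hR.isUnit hS.isUnit

section BlockDiagonal

variable {ι : Type*} [DecidableEq ι] {o : ι → Type*}

theorem transpose_mul_mul_eq_blockDiagonal'_single {α : Type*} [Semiring α] {m : Type*}
    [Fintype m] (i : ι) {C : Matrix m (Σ j, o j) α} {C₀ : Matrix m (o i) α}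
    (hC : ∀ r j (c : o j), C r ⟨j, c⟩ = if h : j = i then C₀ r (h ▸ c) else 0)
    (M : Matrix m m α) : Cᵀ * M * C = blockDiagonal' (Pi.single i (C₀ᵀ * M * C₀)) := by
  ext ⟨j, c⟩ ⟨k, d⟩
  rcases eq_or_ne j i with rfl | hj
  · rcases eq_or_ne k j with rfl | hk
    · simp [mul_apply, hC, Finset.sum_mul]
    · rw [blockDiagonal'_apply_ne _ _ _ (Ne.symm hk)]
      simp [mul_apply, hC, hk]
  · have hCj : ∀ r, C r ⟨j, c⟩ = 0 := fun r ↦ by simp [hC, hj]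
    rcases eq_or_ne k j with rfl | hk
    · rw [blockDiagonal'_apply_eq, Pi.single_eq_of_ne hj]
      simp [mul_apply, hCj]
    · rw [blockDiagonal'_apply_ne _ _ _ (Ne.symm hk)]
      simp [mul_apply, hCj]

variable [Fintype ι]

theorem sum_smul_transpose_mul_mul_eq_blockDiagonal' {α : Type*} [CommSemiring α]
    {m : ι → Type*} [∀ i, Fintype (m i)] {C : ∀ i, Matrix (m i) (Σ j, o j) α}
    {C₀ : ∀ i, Matrix (m i) (o i) α}
    (hC : ∀ i r j (c : o j), C i r ⟨j, c⟩ = if h : j = i then C₀ i r (h ▸ c) else 0)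
    (M : ∀ i, Matrix (m i) (m i) α) (g : ι → α) :
    ∑ i, g i • ((C i)ᵀ * M i * C i) = blockDiagonal' fun i ↦ g i • ((C₀ i)ᵀ * M i * C₀ i) := by
  simp_rw [transpose_mul_mul_eq_blockDiagonal'_single _ (hC _), ← blockDiagonal'_smul,
    ← Pi.single_smul]
  exact (map_sum (blockDiagonal'AddMonoidHom o o α) (fun i ↦ Pi.single i _) _).symm.trans
    (congrArg blockDiagonal' (Finset.univ_sum_single _))

theorem blockDiagonal'_nonsing_inv {α : Type*} [CommRing α] [∀ i, Fintype (o i)]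
    [∀ i, DecidableEq (o i)] (M : ∀ i, Matrix (o i) (o i) α) (hM : ∀ i, IsUnit (M i)) :
    (blockDiagonal' M)⁻¹ = blockDiagonal' fun i ↦ (M i)⁻¹ := by
  refine inv_eq_right_inv ?_
  rw [← blockDiagonal'_mul, ← blockDiagonal'_one]
  congr 1
  ext1 i
  exact mul_nonsing_inv _ ((isUnit_iff_isUnit_det _).1 (hM i))

end BlockDiagonal

end Matrix

theorem trace_predicted_covariance_blockDiagonal' {ι : Type*} [Fintype ι] [DecidableEq ι]
    {n m : ι → Type*} [∀ i, Fintype (n i)] [∀ i, DecidableEq (n i)] [∀ i, Fintype (m i)]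
    [∀ i, DecidableEq (m i)] (A : ∀ i, Matrix (n i) (n i) ℝ) {P : ∀ i, Matrix (n i) (n i) ℝ}
    (hP : ∀ i, (P i).PosDef) {R : ∀ i, Matrix (m i) (m i) ℝ} (hR : ∀ i, (R i).PosDef)
    {C : ∀ i, Matrix (m i) (Σ j, n j) ℝ} {C₀ : ∀ i, Matrix (m i) (n i) ℝ}
    (hC : ∀ i r j (c : n j), C i r ⟨j, c⟩ = if h : j = i then C₀ i r (h ▸ c) else 0)
    {g : ι → ℝ} (hg : ∀ i, g i = 0 ∨ g i = 1) :
    (blockDiagonal' A * ((blockDiagonal' P)⁻¹ + ∑ i, g i • ((C i)ᵀ * (R i)⁻¹ * C i))⁻¹ *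
        (blockDiagonal' A)ᵀ).trace
      = ∑ i, (A i * P i * (A i)ᵀ).trace
        - ∑ i, g i * (A i * P i * (C₀ i)ᵀ
            * (C₀ i * P i * (C₀ i)ᵀ + R i)⁻¹ * C₀ i * P i * (A i)ᵀ).trace := by
  have hpost : ∀ i, ((P i)⁻¹ + g i • ((C₀ i)ᵀ * (R i)⁻¹ * C₀ i)).PosDef := fun i ↦ by
    refine (hP i).inv.add_posSemidef ?_
    rcases hg i with h | h
    · simp [h, PosSemidef.zero]
    · simpa [h] using (hR i).inv.posSemidef.conjTranspose_mul_mul_same (C₀ i)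
  rw [sum_smul_transpose_mul_mul_eq_blockDiagonal' hC,
    blockDiagonal'_nonsing_inv P fun i ↦ (hP i).isUnit, ← blockDiagonal'_add, Pi.add_def,
    blockDiagonal'_nonsing_inv _ fun i ↦ (hpost i).isUnit, blockDiagonal'_transpose,
    ← blockDiagonal'_mul, ← blockDiagonal'_mul, trace_blockDiagonal', ← Finset.sum_sub_distrib]
  refine Finset.sum_congr rfl fun i _ ↦ ?_
  rw [(hP i).inv_add_smul_transpose_mul_inv_mul (hR i) (C₀ i) (hg i)]
  simp only [Matrix.mul_sub, Matrix.sub_mul, trace_sub, Matrix.mul_smul, Matrix.smul_mul,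
    trace_smul, smul_eq_mul, Matrix.mul_assoc]

theorem integral_const_sub_sum_mul {Ω : Type*} [MeasurableSpace Ω] {μ : Measure Ω}
    [IsProbabilityMeasure μ] {ι : Type*} [Fintype ι] (K : ℝ) {X : ι → Ω → ℝ}
    (hX : ∀ i, Integrable (X i) μ) (c : ι → ℝ) :
    ∫ ω, K - ∑ i, X i ω * c i ∂μ = K - ∑ i, c i * ∫ ω, X i ω ∂μ := by
  have hXc : ∀ i ∈ Finset.univ, Integrable (fun ω ↦ X i ω * c i) μ :=
    fun i _ ↦ (hX i).mul_const (c i)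
  rw [integral_sub (integrable_const K) (integrable_finsetSum _ hXc), integral_const,
    integral_finsetSum _ hXc]
  simp [integral_mul_const, mul_comm]

theorem stmt_3_general {N : ℕ} (ndim mdim : Fin N → ℕ)
    {Ω : Type*} [MeasurableSpace Ω] (μmeas : Measure Ω) [IsProbabilityMeasure μmeas]
    (U : Type*)
    (pw : U → Fin N → ℝ)
    (μ : ℝ)
    (γ : U → Fin N → Ω → ℝ) (hγmeas : ∀ u i, Measurable (γ u i))
    (hγval : ∀ u i ω, γ u i ω = 0 ∨ γ u i ω = 1)
    (p : U → Fin N → ℝ) (hp : ∀ u i, (∫ ω, γ u i ω ∂μmeas) = p u i)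
    (Ablk Pblk : ∀ i, Matrix (Fin (ndim i)) (Fin (ndim i)) ℝ)
    (hPblk : ∀ i, (Pblk i).PosDef)
    (C0 : ∀ i, Matrix (Fin (mdim i)) (Fin (ndim i)) ℝ)
    (R : ∀ i, Matrix (Fin (mdim i)) (Fin (mdim i)) ℝ) (hR : ∀ i, (R i).PosDef)
    (A P Q : Matrix (Σ i, Fin (ndim i)) (Σ i, Fin (ndim i)) ℝ)
    (hA : A = Matrix.blockDiagonal' Ablk) (hP : P = Matrix.blockDiagonal' Pblk)
    (C : ∀ i, Matrix (Fin (mdim i)) (Σ j, Fin (ndim j)) ℝ)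
    (hC : ∀ (i : Fin N) (r : Fin (mdim i)) (j : Fin N) (c : Fin (ndim j)),
      C i r ⟨j, c⟩ = if h : j = i then C0 i r (h ▸ c) else 0)
    (ψ : Fin N → ℝ)
    (hψ : ∀ i, ψ i = (Ablk i * Pblk i * (C0 i)ᵀ
        * (C0 i * Pblk i * (C0 i)ᵀ + R i)⁻¹ * C0 i * Pblk i * (Ablk i)ᵀ).trace)
    (cost : U → ℝ)
    (hcost : ∀ u, cost u =
      (∫ ω, (A * (P⁻¹ + ∑ i, γ u i ω • ((C i)ᵀ * (R i)⁻¹ * C i))⁻¹ * Aᵀ).trace ∂μmeas)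
        + Q.trace + μ * ∑ i, pw u i)
    (u v : U) :
    cost u < cost v ↔
      (∑ i, ψ i * p v i) - μ * ∑ i, pw v i < (∑ i, ψ i * p u i) - μ * ∑ i, pw u i := by
  subst hA hP
  have hγint : ∀ w i, Integrable (γ w i) μmeas := fun w i ↦
    .of_mem_Icc 0 1 (hγmeas w i).aemeasurable <| .of_forall fun ω ↦ by
      rcases hγval w i ω with h | h <;> simp [h]
  have hcost' : ∀ w, cost w =
      ∑ i, (Ablk i * Pblk i * (Ablk i)ᵀ).trace - ∑ i, ψ i * p w i + Q.trace + μ * ∑ i, pw w i := by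
    intro w
    rw [hcost w, integral_congr_ae <| .of_forall fun ω ↦
      trace_predicted_covariance_blockDiagonal' Ablk hPblk hR hC (hγval w · ω)]
    simp_rw [← hψ, integral_const_sub_sum_mul _ (hγint w) ψ, hp]
  rw [hcost' u, hcost' v]
  constructor <;> intro h <;> linarith

/-- (Proposition 3, decoupled systems, horizon one.) For a
block-diagonal system with sensors observing distinct subsystems, arrival
variables `γᵢ(u)` with marginals `pᵢ(u)`, and one-step-ahead cost
`C(P,u) = E[Tr(A (P⁻¹ + Σᵢ γᵢ(u) CᵢᵀRᵢ⁻¹Cᵢ)⁻¹ Aᵀ)] + Tr(Q) + μ Σᵢ [u]ᵢ`,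
one has `C(P,u) < C(P,v)` iff
`Σᵢ ψᵢ(Pᵢ)pᵢ(u) − μΣᵢ[u]ᵢ > Σᵢ ψᵢ(Pᵢ)pᵢ(v) − μΣᵢ[v]ᵢ`. -/
theorem stmt_3 {N : ℕ} (ndim mdim : Fin N → ℕ)
    {Ω : Type*} [MeasurableSpace Ω] (μmeas : Measure Ω) [IsProbabilityMeasure μmeas]
    (U : Type*) [Fintype U] [Nonempty U]
    (pw : U → Fin N → ℝ) (hpw : ∀ u i, 0 ≤ pw u i)
    (μ : ℝ) (hμ : 0 ≤ μ)
    (γ : U → Fin N → Ω → ℝ) (hγmeas : ∀ u i, Measurable (γ u i))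
    (hγval : ∀ u i ω, γ u i ω = 0 ∨ γ u i ω = 1)
    (p : U → Fin N → ℝ) (hp : ∀ u i, (∫ ω, γ u i ω ∂μmeas) = p u i)
    (Ablk Pblk : ∀ i, Matrix (Fin (ndim i)) (Fin (ndim i)) ℝ)
    (hPblk : ∀ i, (Pblk i).PosDef)
    (C0 : ∀ i, Matrix (Fin (mdim i)) (Fin (ndim i)) ℝ)
    (R : ∀ i, Matrix (Fin (mdim i)) (Fin (mdim i)) ℝ) (hR : ∀ i, (R i).PosDef)
    (A P Q : Matrix (Σ i, Fin (ndim i)) (Σ i, Fin (ndim i)) ℝ)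
    (hA : A = Matrix.blockDiagonal' Ablk) (hP : P = Matrix.blockDiagonal' Pblk)
    (hQ : Q.PosSemidef)
    (C : ∀ i, Matrix (Fin (mdim i)) (Σ j, Fin (ndim j)) ℝ)
    (hC : ∀ (i : Fin N) (r : Fin (mdim i)) (j : Fin N) (c : Fin (ndim j)),
      C i r ⟨j, c⟩ = if h : j = i then C0 i r (h ▸ c) else 0)
    (ψ : Fin N → ℝ)
    (hψ : ∀ i, ψ i = (Ablk i * Pblk i * (C0 i)ᵀ
        * (C0 i * Pblk i * (C0 i)ᵀ + R i)⁻¹ * C0 i * Pblk i * (Ablk i)ᵀ).trace)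
    (cost : U → ℝ)
    (hcost : ∀ u, cost u =
      (∫ ω, (A * (P⁻¹ + ∑ i, γ u i ω • ((C i)ᵀ * (R i)⁻¹ * C i))⁻¹ * Aᵀ).trace ∂μmeas)
        + Q.trace + μ * ∑ i, pw u i)
    (u v : U) :
    cost u < cost v ↔
      (∑ i, ψ i * p v i) - μ * ∑ i, pw v i < (∑ i, ψ i * p u i) - μ * ∑ i, pw u i :=
  stmt_3_general ndim mdim μmeas U pw μ γ hγmeas hγval p hp Ablk Pblk hPblk C0 R hR A P Q hA hP C hC
    ψ hψ cost hcost u v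
end

section
/- Let X₁ and X₂ be independent real random variables with X₁ exponentially distributed with rate λ₁ > 0 and X₂ exponentially distributed with rate λ₂ > 0, and let α ∈ (0,1) and σ² > 0. Then P(X₁ > α(X₂ + σ²) and X₂ > α(X₁ + σ²)) = (λ₁/(λ₁ + αλ₂) + λ₂/(λ₂ + αλ₁) − 1) · exp(−(λ₁ + λ₂)·ασ²/(1−α)). -/
/-!
With `c = ασ²/(1-α)` the two SINR conditions say exactly that `(X₁, X₂)` lies in the cone with
apex `(c, c)` between the lines of slopes `α` and `1/α`: `c + α(X₁-c) < X₂ < c + (X₁-c)/α`.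
Given `X₁ = x > c`, the window for `X₂` has probability
`exp(-λ₂(c + α(x-c))) - exp(-λ₂(c + (x-c)/α))`, and integrating against `λ₁ exp(-λ₁x)` over
`x > c` leaves `exp(-(λ₁+λ₂)c) (λ₁/(λ₁+αλ₂) - λ₁/(λ₁+λ₂/α))`, where
`λ₁/(λ₁+λ₂/α) = 1 - λ₂/(λ₂+αλ₁)`.
-/

open MeasureTheory ProbabilityTheory Real Set

lemma ProbabilityTheory.IndepFun.measure_preimage_prodMk {Ω β β' : Type*} [MeasurableSpace Ω]
    [MeasurableSpace β] [MeasurableSpace β'] {μ : Measure Ω} [IsFiniteMeasure μ]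
    {X : Ω → β} {Y : Ω → β'} (hXY : IndepFun X Y μ) (hX : AEMeasurable X μ)
    (hY : AEMeasurable Y μ) {S : Set (β × β')} (hS : MeasurableSet S) :
    μ ((fun ω ↦ (X ω, Y ω)) ⁻¹' S) = ((μ.map X).prod (μ.map Y)) S := by
  rw [← hXY.map_prod_eq_prod_map_map hX hY, Measure.map_apply_of_aemeasurable (hX.prodMk hY) hS]

lemma expMeasure_Ioo {r a b : ℝ} (hr : 0 < r) (ha : 0 ≤ a) (hab : a ≤ b) :
    expMeasure r (Ioo a b) = ENNReal.ofReal (rexp (-(r * a)) - rexp (-(r * b))) := by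
  have := isProbabilityMeasure_expMeasure hr
  have : NullSingletonClass (expMeasure r) := by unfold expMeasure gammaMeasure; infer_instance
  rw [measure_congr Ioo_ae_eq_Ioc, ← measure_cdf (expMeasure r), StieltjesFunction.measure_Ioc,
    cdf_expMeasure_eq hr, cdf_expMeasure_eq hr, if_pos ha, if_pos (ha.trans hab)]
  ring_nf

lemma lintegral_expMeasure_ofReal {r c : ℝ} (hr : 0 ≤ r) (hc : 0 ≤ c) {f : ℝ → ℝ}
    (hf : Measurable f) (hf_nonpos : ∀ x ≤ c, f x ≤ 0) (hf_nonneg : ∀ x, c < x → 0 ≤ f x)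
    (hfi : IntegrableOn (fun x ↦ r * rexp (-(r * x)) * f x) (Ioi c)) :
    ∫⁻ x, ENNReal.ofReal (f x) ∂expMeasure r
      = ENNReal.ofReal (∫ x in Ioi c, r * rexp (-(r * x)) * f x) := by
  have hpdf : Measurable (exponentialPDF r) := (measurable_exponentialPDFReal r).ennreal_ofReal
  have hind : ∀ x, exponentialPDF r x * ENNReal.ofReal (f x)
      = (Ioi c).indicator (fun x ↦ ENNReal.ofReal (r * rexp (-(r * x)) * f x)) x := by
    intro x
    rcases le_or_gt x c with hx | hx
    · rw [indicator_of_notMem (show x ∉ Ioi c from not_lt.2 hx),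
        ENNReal.ofReal_of_nonpos (hf_nonpos x hx), mul_zero]
    · rw [indicator_of_mem (show x ∈ Ioi c from hx), exponentialPDF_of_nonneg (hc.trans hx.le),
        ← ENNReal.ofReal_mul (by positivity)]
  have hnonneg : 0 ≤ᵐ[volume.restrict (Ioi c)] fun x ↦ r * rexp (-(r * x)) * f x :=
    (ae_restrict_mem measurableSet_Ioi).mono fun x hx ↦ by have := hf_nonneg x hx; positivity
  rw [show expMeasure r = volume.withDensity (exponentialPDF r) from rfl,
    lintegral_withDensity_eq_lintegral_mul _ hpdf hf.ennreal_ofReal]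
  simp_rw [Pi.mul_apply, hind]
  rw [lintegral_indicator measurableSet_Ioi, ofReal_integral_eq_lintegral_ofReal hfi hnonneg]

lemma mul_exp_mul_exp_eq (r s k c x : ℝ) :
    r * rexp (-(r * x)) * rexp (-(s * (c + k * (x - c))))
      = r * rexp (s * (k - 1) * c) * rexp (-(r + s * k) * x) := by
  rw [mul_assoc, mul_assoc, ← exp_add, ← exp_add]
  ring_nf

lemma integrableOn_Ioi_mul_exp_mul_exp {r s k : ℝ} (h : 0 < r + s * k) (c : ℝ) :
    IntegrableOn (fun x ↦ r * rexp (-(r * x)) * rexp (-(s * (c + k * (x - c))))) (Ioi c) := by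
  simp_rw [mul_exp_mul_exp_eq]
  exact (exp_neg_integrableOn_Ioi c h).const_mul _

lemma integral_Ioi_mul_exp_mul_exp {r s k : ℝ} (h : 0 < r + s * k) (c : ℝ) :
    ∫ x in Ioi c, r * rexp (-(r * x)) * rexp (-(s * (c + k * (x - c))))
      = r / (r + s * k) * rexp (-((r + s) * c)) := by
  simp_rw [mul_exp_mul_exp_eq]
  rw [integral_const_mul, integral_exp_mul_Ioi (by linarith), neg_div_neg_eq,
    show -((r + s) * c) = s * (k - 1) * c + -(r + s * k) * c by ring, exp_add]
  ring

lemma expMeasure_Ioo_cone {s c k₁ k₂ : ℝ} (hs : 0 < s) (hc : 0 ≤ c) (hk₁ : 0 ≤ k₁)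
    (hk : k₁ ≤ k₂) (x : ℝ) :
    expMeasure s (Ioo (c + k₁ * (x - c)) (c + k₂ * (x - c)))
      = ENNReal.ofReal (rexp (-(s * (c + k₁ * (x - c)))) - rexp (-(s * (c + k₂ * (x - c))))) := by
  -- For `x ≤ c` the window is empty and `ENNReal.ofReal` truncates the negative difference to `0`.
  rcases le_or_gt x c with hx | hx
  · rw [Ioo_eq_empty (by nlinarith), measure_empty, eq_comm, ENNReal.ofReal_eq_zero, sub_nonpos,
      exp_le_exp]
    nlinarith [mul_nonneg hs.le (mul_nonneg (sub_nonneg.2 hk) (sub_nonneg.2 hx))]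
  · exact expMeasure_Ioo hs (by nlinarith) (by nlinarith)

theorem expMeasure_prod_cone {r s c k₁ k₂ : ℝ} (hr : 0 < r) (hs : 0 < s) (hc : 0 ≤ c)
    (hk₁ : 0 ≤ k₁) (hk : k₁ ≤ k₂) :
    (expMeasure r).prod (expMeasure s) {p | c + k₁ * (p.1 - c) < p.2 ∧ p.2 < c + k₂ * (p.1 - c)}
      = ENNReal.ofReal ((r / (r + s * k₁) - r / (r + s * k₂)) * rexp (-((r + s) * c))) := by
  have := isProbabilityMeasure_expMeasure hs
  have hmeas : MeasurableSet {p : ℝ × ℝ | c + k₁ * (p.1 - c) < p.2 ∧ p.2 < c + k₂ * (p.1 - c)} :=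
    (measurableSet_lt (by fun_prop) measurable_snd).inter
      (measurableSet_lt measurable_snd (by fun_prop))
  have hslice (x : ℝ) :
      Prod.mk x ⁻¹' {p : ℝ × ℝ | c + k₁ * (p.1 - c) < p.2 ∧ p.2 < c + k₂ * (p.1 - c)}
        = Ioo (c + k₁ * (x - c)) (c + k₂ * (x - c)) := rfl
  set g : ℝ → ℝ → ℝ := fun k x ↦ r * rexp (-(r * x)) * rexp (-(s * (c + k * (x - c))))
  have hg₁ : IntegrableOn (g k₁) (Ioi c) := integrableOn_Ioi_mul_exp_mul_exp (by positivity) c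
  have hg₂ : IntegrableOn (g k₂) (Ioi c) :=
    integrableOn_Ioi_mul_exp_mul_exp (by nlinarith) c
  have hdiff : (fun x ↦ r * rexp (-(r * x)) *
      (rexp (-(s * (c + k₁ * (x - c)))) - rexp (-(s * (c + k₂ * (x - c))))))
        = fun x ↦ g k₁ x - g k₂ x :=
    funext fun x ↦ mul_sub _ _ _
  rw [Measure.prod_apply hmeas]
  simp_rw [hslice, expMeasure_Ioo_cone hs hc hk₁ hk]
  rw [lintegral_expMeasure_ofReal hr.le hc (by fun_prop), hdiff, integral_sub hg₁ hg₂,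
    integral_Ioi_mul_exp_mul_exp (by positivity), integral_Ioi_mul_exp_mul_exp (by nlinarith),
    sub_mul]
  · intro x hx
    rw [sub_nonpos, exp_le_exp]
    nlinarith [mul_nonneg (mul_nonneg hs.le (sub_nonneg.2 hk)) (sub_nonneg.2 hx)]
  · intro x hx
    rw [sub_nonneg, exp_le_exp]
    nlinarith [mul_nonneg (mul_nonneg hs.le (sub_nonneg.2 hk)) (sub_nonneg.2 hx.le)]
  · rw [hdiff]
    exact hg₁.sub hg₂

lemma sinr_region_eq_cone {α σ2 c : ℝ} (hα : 0 < α) (hc : (1 - α) * c = α * σ2) :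
    {p : ℝ × ℝ | p.1 > α * (p.2 + σ2) ∧ p.2 > α * (p.1 + σ2)}
      = {p | c + α * (p.1 - c) < p.2 ∧ p.2 < c + α⁻¹ * (p.1 - c)} := by
  ext ⟨x, y⟩
  have hlower : c + α * (x - c) = α * (x + σ2) := by linear_combination hc
  have hupper : c + α⁻¹ * (x - c) = (x - α * σ2) / α := by
    field_simp
    linear_combination -hc
  simp only [mem_ofPred_eq, hlower, hupper, lt_div_iff₀ hα]
  constructor <;> rintro ⟨_, _⟩ <;> constructor <;> linarith

/-- For independent `X₁ ~ Exp(λ₁)`, `X₂ ~ Exp(λ₂)` and `α ∈ (0,1)`,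
`σ² > 0`, the probability that both SINRs exceed `α`, i.e.
`P(X₁ > α(X₂+σ²) ∧ X₂ > α(X₁+σ²))`, equals
`(λ₁/(λ₁+αλ₂) + λ₂/(λ₂+αλ₁) − 1)·exp(−(λ₁+λ₂)·ασ²/(1−α))`. -/
theorem stmt_8 {Ω : Type*} [MeasureTheory.MeasureSpace Ω]
    (μ : Measure Ω) [IsProbabilityMeasure μ]
    (X1 X2 : Ω → ℝ) (hX1m : Measurable X1) (hX2m : Measurable X2)
    (l1 l2 : ℝ) (hl1 : 0 < l1) (hl2 : 0 < l2)
    (hX1 : Measure.map X1 μ = expMeasure l1)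
    (hX2 : Measure.map X2 μ = expMeasure l2)
    (hindep : IndepFun X1 X2 μ)
    (α σ2 : ℝ) (hα : α ∈ Set.Ioo (0:ℝ) 1) (hσ2 : 0 < σ2) :
    μ {ω | X1 ω > α * (X2 ω + σ2) ∧ X2 ω > α * (X1 ω + σ2)}
      = ENNReal.ofReal
          ((l1 / (l1 + α * l2) + l2 / (l2 + α * l1) - 1)
            * rexp (-(l1 + l2) * (α * σ2 / (1 - α)))) := by
  obtain ⟨hα0, hα1⟩ := hα
  set c := α * σ2 / (1 - α) with hc_def
  have hc : (1 - α) * c = α * σ2 := by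
    rw [hc_def, mul_div_cancel₀ _ (by linarith)]
  have hαinv : α ≤ α⁻¹ := hα1.le.trans ((one_le_inv₀ hα0).2 hα1.le)
  have hmeas : MeasurableSet {p : ℝ × ℝ | p.1 > α * (p.2 + σ2) ∧ p.2 > α * (p.1 + σ2)} :=
    (measurableSet_lt (by fun_prop) measurable_fst).inter
      (measurableSet_lt (by fun_prop) measurable_snd)
  calc μ {ω | X1 ω > α * (X2 ω + σ2) ∧ X2 ω > α * (X1 ω + σ2)}
      = (expMeasure l1).prod (expMeasure l2)
          {p : ℝ × ℝ | p.1 > α * (p.2 + σ2) ∧ p.2 > α * (p.1 + σ2)} := by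
        rw [← hX1, ← hX2]
        exact hindep.measure_preimage_prodMk hX1m.aemeasurable hX2m.aemeasurable hmeas
    _ = ENNReal.ofReal ((l1 / (l1 + l2 * α) - l1 / (l1 + l2 * α⁻¹)) * rexp (-((l1 + l2) * c))) := by
        rw [sinr_region_eq_cone hα0 hc,
          expMeasure_prod_cone hl1 hl2 (div_nonneg (by positivity) (by linarith)) hα0.le hαinv]
    _ = _ := by
        rw [neg_mul]
        congr 2
        field_simp
        ring
end

section
/- Let X₁ and X₂ be independent real random variables with X₁ exponentially distributed with rate λ₁ > 0 and X₂ exponentially distributed with rate λ₂ > 0, and let α ∈ (0,1) and σ² > 0. Then P(X₁ > α(X₂ + σ²) and X₂ ≤ α(X₁ + σ²)) = (λ₂/(λ₂ + αλ₁))·exp(−αλ₁σ²) − (λ₁/(λ₁ + αλ₂) + λ₂/(λ₂ + αλ₁) − 1)·exp(−(λ₁ + λ₂)·ασ²/(1−α)). -/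
/-!
Condition on `X₂ = y ≥ 0`. Then sensor 1 is decoded and sensor 2 is not exactly when
`X₁ > α (y + σ²)` and `X₁ ≥ y / α - σ²`. Since `X₁` has no atoms, this has probability
`exp (-λ₁ max (α (y + σ²), y / α - σ²))`. The two branches of the `max` cross at
`t = α σ² / (1 - α)`, so integrating against the density `λ₂ exp (-λ₂ y)` splits into two
exponential integrals, over `(0, t]` and `(t, ∞)`; their boundary terms at `t` both reduce to
`exp (-(λ₁ + λ₂) t)`.
-/

open MeasureTheory ProbabilityTheory Real Set

namespace ProbabilityTheory

instance nullSingletonClass_expMeasure (r : ℝ) : NullSingletonClass (expMeasure r) :=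
  ⟨fun x => withDensity_absolutelyContinuous _ _ (measure_singleton x)⟩

instance sFinite_expMeasure (r : ℝ) : SFinite (expMeasure r) :=
  inferInstanceAs (SFinite (volume.withDensity _))

lemma ae_nonneg_expMeasure (r : ℝ) : ∀ᵐ x ∂expMeasure r, 0 ≤ x := by
  have h : expMeasure r (Iio 0) = 0 := by
    rw [expMeasure, gammaMeasure, withDensity_apply _ measurableSet_Iio]
    exact lintegral_exponentialPDF_of_nonpos le_rfl
  rw [ae_iff]
  simp only [not_le]
  exact h

lemma expMeasure_Ioi {r x : ℝ} (hr : 0 < r) (hx : 0 ≤ x) :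
    expMeasure r (Ioi x) = ENNReal.ofReal (exp (-(r * x))) := by
  have := isProbabilityMeasure_expMeasure hr
  have hexp : exp (-(r * x)) ≤ 1 := exp_le_one_iff.mpr (by nlinarith)
  rw [← compl_Iic, prob_compl_eq_one_sub measurableSet_Iic, ← ofReal_cdf,
    cdf_expMeasure_eq hr, if_pos hx, ← ENNReal.ofReal_one,
    ← ENNReal.ofReal_sub _ (by linarith), sub_sub_cancel]

lemma expMeasure_Ioi_inter_Ici {r a b : ℝ} (hr : 0 < r) (ha : 0 ≤ a) :
    expMeasure r (Ioi a ∩ Ici b) = ENNReal.ofReal (exp (-(r * max a b))) := by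
  rw [← expMeasure_Ioi hr (le_max_of_le_left ha), ← Ioi_inter_Ioi]
  exact measure_congr ((ae_eq_refl _).inter Ioi_ae_eq_Ici.symm)

lemma lintegral_expMeasure {r : ℝ} {f : ℝ → ENNReal} (hf : Measurable f) :
    ∫⁻ x, f x ∂expMeasure r
      = ∫⁻ x in Ioi 0, ENNReal.ofReal (r * exp (-(r * x))) * f x := by
  change ∫⁻ x, f x ∂volume.withDensity (exponentialPDF r) = _
  have hsupp : (exponentialPDF r * f).support ⊆ Ici 0 := fun x hx => by
    by_contra hneg
    exact hx (by simp [exponentialPDF_of_neg (not_le.mp hneg)])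
  have hpdf : Measurable (exponentialPDF r) := (measurable_exponentialPDFReal r).ennreal_ofReal
  rw [lintegral_withDensity_eq_lintegral_mul _ hpdf hf,
    ← setLIntegral_eq_of_support_subset hsupp, ← setLIntegral_congr Ioi_ae_eq_Ici]
  exact setLIntegral_congr_fun measurableSet_Ioi fun x hx => by
    simp [exponentialPDF_of_nonneg (le_of_lt hx)]

lemma IndepFun.measure_preimage_eq_prod {Ω α β : Type*} [MeasurableSpace Ω]
    [MeasurableSpace α] [MeasurableSpace β] {μ : Measure Ω} [IsFiniteMeasure μ]
    {X : Ω → α} {Y : Ω → β} (hX : Measurable X) (hY : Measurable Y) (h : IndepFun X Y μ)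
    {S : Set (α × β)} (hS : MeasurableSet S) :
    μ ((fun ω => (X ω, Y ω)) ⁻¹' S) = ((μ.map X).prod (μ.map Y)) S := by
  rw [← h.map_prod_eq_prod_map_map hX.aemeasurable hY.aemeasurable,
    Measure.map_apply (hX.prodMk hY) hS]

end ProbabilityTheory

section ExpIntegrals

variable {K b : ℝ}

lemma lintegral_Ioc_ofReal_mul_exp_neg (hK : 0 ≤ K) (hb : 0 < b) {t : ℝ} (ht : 0 ≤ t) :
    ∫⁻ y in Ioc 0 t, ENNReal.ofReal (K * exp (-(b * y)))
      = ENNReal.ofReal (K * ((1 - exp (-(b * t))) / b)) := by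
  have hint : ∫ y in (0)..t, exp (-(b * y)) = (1 - exp (-(b * t))) / b := by
    have hderiv : ∀ y ∈ uIcc 0 t,
        HasDerivAt (fun a => -exp (-(b * a)) / b) (exp (-(b * y))) y := fun y _ => by
      simpa [hb.ne'] using (hasDerivAt_neg_exp_mul_exp (r := b) (x := y)).div_const b
    rw [intervalIntegral.integral_eq_sub_of_hasDerivAt hderiv
      ((continuous_exp.comp (by fun_prop)).intervalIntegrable _ _)]
    simp only [mul_zero, neg_zero, exp_zero]
    ring
  rw [← ofReal_integral_eq_lintegral_ofReal ((exp_neg_integrableOn_Ioc hb).const_mul K)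
    (ae_of_all _ fun y => by positivity), integral_const_mul,
    ← intervalIntegral.integral_of_le ht, hint]

lemma lintegral_Ioi_ofReal_mul_exp_neg (hK : 0 ≤ K) (hb : 0 < b) (t : ℝ) :
    ∫⁻ y in Ioi t, ENNReal.ofReal (K * exp (-(b * y)))
      = ENNReal.ofReal (K * (exp (-(b * t)) / b)) := by
  have hint : IntegrableOn (fun y => exp (-(b * y))) (Ioi t) := by
    simpa only [neg_mul] using exp_neg_integrableOn_Ioi t hb
  rw [← ofReal_integral_eq_lintegral_ofReal (hint.const_mul K)
    (ae_of_all _ fun y => by positivity), integral_const_mul]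
  congr 2
  simpa [neg_mul, neg_div_neg_eq] using integral_exp_mul_Ioi (neg_lt_zero.mpr hb) t

end ExpIntegrals

lemma lintegral_expMeasure_exp_neg_max {l1 l2 α σ2 : ℝ} (hl1 : 0 < l1) (hl2 : 0 < l2)
    (hα0 : 0 < α) (hα1 : α < 1) (hσ2 : 0 ≤ σ2) :
    ∫⁻ y, ENNReal.ofReal (exp (-(l1 * max (α * (y + σ2)) (y / α - σ2)))) ∂expMeasure l2
      = ENNReal.ofReal
          (l2 / (l2 + α * l1) * exp (-(α * l1 * σ2))
            - (l1 / (l1 + α * l2) + l2 / (l2 + α * l1) - 1)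
              * exp (-(l1 + l2) * (α * σ2 / (1 - α)))) := by
  have h1α : 0 < 1 - α := by linarith
  set t := α * σ2 / (1 - α) with ht_def
  have ht : 0 ≤ t := by positivity
  have hcross : ∀ y, y / α - σ2 ≤ α * (y + σ2) ↔ y ≤ t := fun y => by
    rw [sub_le_iff_le_add, div_le_iff₀ hα0, le_div_iff₀ h1α]
    constructor <;> intro h <;> nlinarith
  set b1 := l2 + α * l1 with hb1_def
  set b2 := l2 + l1 / α with hb2_def
  have hb1 : 0 < b1 := by positivity
  have hb2 : 0 < b2 := by positivity
  have hlow : ∫⁻ y in Ioc 0 t, ENNReal.ofReal (l2 * exp (-(l2 * y)))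
        * ENNReal.ofReal (exp (-(l1 * max (α * (y + σ2)) (y / α - σ2))))
      = ∫⁻ y in Ioc 0 t, ENNReal.ofReal (l2 * exp (-(α * l1 * σ2)) * exp (-(b1 * y))) := by
    refine setLIntegral_congr_fun measurableSet_Ioc fun y hy => ?_
    rw [max_eq_left ((hcross y).mpr hy.2), ← ENNReal.ofReal_mul (by positivity), mul_assoc,
      mul_assoc, ← exp_add, ← exp_add, hb1_def]
    ring_nf
  have hhigh : ∫⁻ y in Ioi t, ENNReal.ofReal (l2 * exp (-(l2 * y)))
        * ENNReal.ofReal (exp (-(l1 * max (α * (y + σ2)) (y / α - σ2))))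
      = ∫⁻ y in Ioi t, ENNReal.ofReal (l2 * exp (l1 * σ2) * exp (-(b2 * y))) := by
    refine setLIntegral_congr_fun measurableSet_Ioi fun y hy => ?_
    rw [max_eq_right (le_of_not_ge fun h => not_le.mpr hy ((hcross y).mp h)),
      ← ENNReal.ofReal_mul (by positivity), mul_assoc, mul_assoc, ← exp_add, ← exp_add,
      hb2_def]
    ring_nf
  have hdecay : 0 ≤ 1 - exp (-(b1 * t)) := sub_nonneg.mpr (exp_le_one_iff.mpr (by nlinarith))
  rw [lintegral_expMeasure (by fun_prop), ← Ioc_union_Ioi_eq_Ioi ht,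
    lintegral_union measurableSet_Ioi (Ioc_disjoint_Ioi le_rfl), hlow, hhigh,
    lintegral_Ioc_ofReal_mul_exp_neg (by positivity) hb1 ht,
    lintegral_Ioi_ofReal_mul_exp_neg (by positivity) hb2,
    ← ENNReal.ofReal_add (by positivity) (by positivity)]
  congr 1
  have hE1 : exp (-(α * l1 * σ2)) * exp (-(b1 * t)) = exp (-(l1 + l2) * t) := by
    rw [← exp_add, ht_def, hb1_def]
    field_simp
    ring_nf
  have hE2 : exp (l1 * σ2) * exp (-(b2 * t)) = exp (-(l1 + l2) * t) := by
    rw [← exp_add, ht_def, hb2_def]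
    field_simp
    ring_nf
  calc _ = l2 / b1 * exp (-(α * l1 * σ2)) - l2 / b1 * (exp (-(α * l1 * σ2)) * exp (-(b1 * t)))
        + l2 / b2 * (exp (l1 * σ2) * exp (-(b2 * t))) := by ring
    _ = _ := by
      rw [hE1, hE2, hb2_def]
      field_simp
      ring

/-- For independent `X₁ ~ Exp(λ₁)`, `X₂ ~ Exp(λ₂)`, `α ∈ (0,1)` and
`σ² > 0`, the probability that only sensor 1's packet is received is
`P(X₁ > α(X₂+σ²) ∧ X₂ ≤ α(X₁+σ²)) = (λ₂/(λ₂+αλ₁))·exp(−αλ₁σ²)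
  − (λ₁/(λ₁+αλ₂) + λ₂/(λ₂+αλ₁) − 1)·exp(−(λ₁+λ₂)·ασ²/(1−α))`. -/
theorem stmt_10 {Ω : Type*} [MeasureTheory.MeasureSpace Ω]
    (μ : Measure Ω) [IsProbabilityMeasure μ]
    (X1 X2 : Ω → ℝ) (hX1m : Measurable X1) (hX2m : Measurable X2)
    (l1 l2 : ℝ) (hl1 : 0 < l1) (hl2 : 0 < l2)
    (hX1 : Measure.map X1 μ = expMeasure l1)
    (hX2 : Measure.map X2 μ = expMeasure l2)
    (hindep : IndepFun X1 X2 μ)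
    (α σ2 : ℝ) (hα : α ∈ Set.Ioo (0:ℝ) 1) (hσ2 : 0 < σ2) :
    μ {ω | X1 ω > α * (X2 ω + σ2) ∧ X2 ω ≤ α * (X1 ω + σ2)}
      = ENNReal.ofReal
          (l2 / (l2 + α * l1) * rexp (-(α * l1 * σ2))
            - (l1 / (l1 + α * l2) + l2 / (l2 + α * l1) - 1)
              * rexp (-(l1 + l2) * (α * σ2 / (1 - α)))) := by
  obtain ⟨hα0, hα1⟩ := hα
  set S : Set (ℝ × ℝ) := {p | α * (p.2 + σ2) < p.1 ∧ p.2 ≤ α * (p.1 + σ2)}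
  have hS : MeasurableSet S := by measurability
  have hslice : ∀ y, 0 ≤ y → expMeasure l1 ((fun x => (x, y)) ⁻¹' S)
      = ENNReal.ofReal (exp (-(l1 * max (α * (y + σ2)) (y / α - σ2)))) := fun y hy => by
    have hpre : (fun x => (x, y)) ⁻¹' S = Ioi (α * (y + σ2)) ∩ Ici (y / α - σ2) := by
      ext x
      simp only [S, mem_preimage, mem_ofPred_eq, mem_inter_iff, mem_Ioi, mem_Ici,
        sub_le_iff_le_add, div_le_iff₀ hα0, mul_comm α]
    rw [hpre, expMeasure_Ioi_inter_Ici hl1 (by positivity)]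
  calc μ {ω | X1 ω > α * (X2 ω + σ2) ∧ X2 ω ≤ α * (X1 ω + σ2)}
      = ((expMeasure l1).prod (expMeasure l2)) S := by
        rw [← hX1, ← hX2, ← hindep.measure_preimage_eq_prod hX1m hX2m hS]
        rfl
    _ = ∫⁻ y, expMeasure l1 ((fun x => (x, y)) ⁻¹' S) ∂expMeasure l2 :=
        Measure.prod_apply_symm hS
    _ = ∫⁻ y, ENNReal.ofReal (exp (-(l1 * max (α * (y + σ2)) (y / α - σ2))))
          ∂expMeasure l2 := lintegral_congr_ae ((ae_nonneg_expMeasure l2).mono hslice)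
    _ = _ := lintegral_expMeasure_exp_neg_max hl1 hl2 hα0 hα1 hσ2.le
end

section
/- Let μ > 0 and let q₁, q₂, p₁, p₂ satisfy 0 < pᵢ ≤ qᵢ ≤ 1 for i = 1,2. For nonnegative reals x₁, x₂ (the values ψ₁(P₁), ψ₂(P₂)), define the four one-step-ahead costs (up to a common additive constant) C₀₀ = 0, C₁₀ = −q₁x₁ + μ, C₀₁ = −q₂x₂ + μ, C₁₁ = −p₁x₁ − p₂x₂ + 2μ. Then: (i) if x₁ < μ/q₁ and x₂ < μ/q₂, then C₀₀ is the strict minimum; (ii) if (q₁−p₁)x₁ + μ < p₂x₂ and (q₂−p₂)x₂ + μ < p₁x₁, then C₁₁ is the strict minimum; (iii) if q₁x₁ > q₂x₂ and neither the conditions of (i) nor of (ii) hold, then C₁₀ = min{C₀₀, C₁₀, C₀₁, C₁₁}; (iv) if q₁x₁ < q₂x₂ and neither the conditions of (i) nor of (ii) hold, then C₀₁ = min{C₀₀, C₁₀, C₀₁, C₁₁}. -/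
/-!
Only linear arithmetic is involved. Below both thresholds each transmission costs more than it
saves, since `pᵢ xᵢ ≤ qᵢ xᵢ < μ`. The two conditions of (ii) say exactly that `C₁₁` beats `C₁₀`
and `C₀₁`, and each forces `pⱼ xⱼ > μ`, so `C₁₁ < 0`. When `q₁x₁ > q₂x₂`, failure of (i) gives
`q₁x₁ ≥ μ`, and failure of (ii) gives `C₁₀ ≤ C₁₁` (the second alternative is turned into the first
through `q₂x₂ < q₁x₁`). Case (iv) is case (iii) with the sensors swapped.
-/

section TwoSensorCosts

variable {μ q1 q2 p1 p2 x1 x2 : ℝ}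

lemma idle_cost_lt_others (hpq1 : p1 ≤ q1) (hpq2 : p2 ≤ q2) (hx1 : 0 ≤ x1) (hx2 : 0 ≤ x2)
    (h1 : q1 * x1 < μ) (h2 : q2 * x2 < μ) :
    0 < -(q1 * x1) + μ ∧ 0 < -(q2 * x2) + μ ∧ 0 < -(p1 * x1) - p2 * x2 + 2 * μ := by
  have hx1' : p1 * x1 ≤ q1 * x1 := mul_le_mul_of_nonneg_right hpq1 hx1
  have hx2' : p2 * x2 ≤ q2 * x2 := mul_le_mul_of_nonneg_right hpq2 hx2
  exact ⟨by linarith, by linarith, by linarith⟩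

lemma joint_cost_lt_others (hpq1 : p1 ≤ q1) (hpq2 : p2 ≤ q2) (hx1 : 0 ≤ x1) (hx2 : 0 ≤ x2)
    (h1 : (q1 - p1) * x1 + μ < p2 * x2) (h2 : (q2 - p2) * x2 + μ < p1 * x1) :
    -(p1 * x1) - p2 * x2 + 2 * μ < 0 ∧
      -(p1 * x1) - p2 * x2 + 2 * μ < -(q1 * x1) + μ ∧
      -(p1 * x1) - p2 * x2 + 2 * μ < -(q2 * x2) + μ := by
  have hloss1 : 0 ≤ (q1 - p1) * x1 := mul_nonneg (sub_nonneg.mpr hpq1) hx1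
  have hloss2 : 0 ≤ (q2 - p2) * x2 := mul_nonneg (sub_nonneg.mpr hpq2) hx2
  exact ⟨by linarith, by linarith, by linarith⟩

lemma first_cost_le_others (hq1 : 0 < q1) (hq2 : 0 < q2) (hdom : q2 * x2 < q1 * x1)
    (hidle : ¬(x1 < μ / q1 ∧ x2 < μ / q2))
    (hjoint : ¬((q1 - p1) * x1 + μ < p2 * x2 ∧ (q2 - p2) * x2 + μ < p1 * x1)) :
    -(q1 * x1) + μ ≤ 0 ∧
      -(q1 * x1) + μ ≤ -(q2 * x2) + μ ∧
      -(q1 * x1) + μ ≤ -(p1 * x1) - p2 * x2 + 2 * μ := by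
  have hμ : μ ≤ q1 * x1 := by
    rcases not_and_or.mp hidle with h | h
    · exact (div_le_iff₀' hq1).mp (not_lt.mp h)
    · linarith [(div_le_iff₀' hq2).mp (not_lt.mp h)]
  have hgain : p2 * x2 ≤ (q1 - p1) * x1 + μ := by
    rcases not_and_or.mp hjoint with h | h
    · exact not_lt.mp h
    · linarith [not_lt.mp h]
  exact ⟨by linarith, by linarith, by linarith⟩

end TwoSensorCosts

theorem stmt_16_general (μ q1 q2 p1 p2 x1 x2 : ℝ)
    (hp1 : 0 < p1) (hp2 : 0 < p2)
    (hpq1 : p1 ≤ q1) (hpq2 : p2 ≤ q2)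
    (hx1 : 0 ≤ x1) (hx2 : 0 ≤ x2)
    (C00 C10 C01 C11 : ℝ)
    (h00 : C00 = 0) (h10 : C10 = -(q1 * x1) + μ)
    (h01 : C01 = -(q2 * x2) + μ) (h11 : C11 = -(p1 * x1) - p2 * x2 + 2 * μ) :
    ((x1 < μ / q1 ∧ x2 < μ / q2) →
        (C00 < C10 ∧ C00 < C01 ∧ C00 < C11)) ∧
    (((q1 - p1) * x1 + μ < p2 * x2 ∧ (q2 - p2) * x2 + μ < p1 * x1) →
        (C11 < C00 ∧ C11 < C10 ∧ C11 < C01)) ∧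
    ((q1 * x1 > q2 * x2 ∧
        ¬(x1 < μ / q1 ∧ x2 < μ / q2) ∧
        ¬((q1 - p1) * x1 + μ < p2 * x2 ∧ (q2 - p2) * x2 + μ < p1 * x1)) →
        C10 = min (min C00 C10) (min C01 C11)) ∧
    ((q1 * x1 < q2 * x2 ∧
        ¬(x1 < μ / q1 ∧ x2 < μ / q2) ∧
        ¬((q1 - p1) * x1 + μ < p2 * x2 ∧ (q2 - p2) * x2 + μ < p1 * x1)) →
        C01 = min (min C00 C10) (min C01 C11)) := by
  subst h00 h10 h01 h11
  have hq1 : 0 < q1 := hp1.trans_le hpq1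
  have hq2 : 0 < q2 := hp2.trans_le hpq2
  refine ⟨?_, ?_, ?_, ?_⟩
  · rintro ⟨h1, h2⟩
    exact idle_cost_lt_others hpq1 hpq2 hx1 hx2 ((lt_div_iff₀' hq1).mp h1)
      ((lt_div_iff₀' hq2).mp h2)
  · rintro ⟨h1, h2⟩
    exact joint_cost_lt_others hpq1 hpq2 hx1 hx2 h1 h2
  · rintro ⟨hdom, hidle, hjoint⟩
    obtain ⟨h0, h01, h11⟩ := first_cost_le_others hq1 hq2 hdom hidle hjoint
    rw [min_eq_right h0, min_eq_left (le_min h01 h11)]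
  · rintro ⟨hdom, hidle, hjoint⟩
    obtain ⟨h0, h10, h11⟩ := first_cost_le_others (p1 := p2) (p2 := p1) hq2 hq1 hdom
      (by rwa [and_comm]) (by rwa [and_comm])
    rw [min_eq_left (show -(q2 * x2) + μ ≤ -(p1 * x1) - p2 * x2 + 2 * μ by linarith),
      min_eq_right (le_min h0 h10)]

/-- Threshold structure of the optimal one-step-ahead action for two
decoupled subsystems with two power levels. With `xᵢ = ψᵢ(Pᵢ) ≥ 0` and costs (up to a
common additive constant) `C₀₀ = 0`, `C₁₀ = −q₁x₁ + μ`, `C₀₁ = −q₂x₂ + μ`,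
`C₁₁ = −p₁x₁ − p₂x₂ + 2μ`:
(i) if `x₁ < μ/q₁` and `x₂ < μ/q₂` then `C₀₀` is the strict minimum;
(ii) if `(q₁−p₁)x₁ + μ < p₂x₂` and `(q₂−p₂)x₂ + μ < p₁x₁` then `C₁₁` is the strict minimum;
(iii) if `q₁x₁ > q₂x₂` and neither (i) nor (ii) holds, `C₁₀` attains the minimum;
(iv) if `q₁x₁ < q₂x₂` and neither (i) nor (ii) holds, `C₀₁` attains the minimum. -/
theorem stmt_16 (μ q1 q2 p1 p2 x1 x2 : ℝ)
    (hμ : 0 < μ)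
    (hp1 : 0 < p1) (hp2 : 0 < p2)
    (hpq1 : p1 ≤ q1) (hpq2 : p2 ≤ q2)
    (hq1 : q1 ≤ 1) (hq2 : q2 ≤ 1)
    (hx1 : 0 ≤ x1) (hx2 : 0 ≤ x2)
    (C00 C10 C01 C11 : ℝ)
    (h00 : C00 = 0) (h10 : C10 = -(q1 * x1) + μ)
    (h01 : C01 = -(q2 * x2) + μ) (h11 : C11 = -(p1 * x1) - p2 * x2 + 2 * μ) :
    ((x1 < μ / q1 ∧ x2 < μ / q2) →
        (C00 < C10 ∧ C00 < C01 ∧ C00 < C11)) ∧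
    (((q1 - p1) * x1 + μ < p2 * x2 ∧ (q2 - p2) * x2 + μ < p1 * x1) →
        (C11 < C00 ∧ C11 < C10 ∧ C11 < C01)) ∧
    ((q1 * x1 > q2 * x2 ∧
        ¬(x1 < μ / q1 ∧ x2 < μ / q2) ∧
        ¬((q1 - p1) * x1 + μ < p2 * x2 ∧ (q2 - p2) * x2 + μ < p1 * x1)) →
        C10 = min (min C00 C10) (min C01 C11)) ∧
    ((q1 * x1 < q2 * x2 ∧
        ¬(x1 < μ / q1 ∧ x2 < μ / q2) ∧
        ¬((q1 - p1) * x1 + μ < p2 * x2 ∧ (q2 - p2) * x2 + μ < p1 * x1)) →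
        C01 = min (min C00 C10) (min C01 C11)) :=
  stmt_16_general μ q1 q2 p1 p2 x1 x2 hp1 hp2 hpq1 hpq2 hx1 hx2 C00 C10 C01 C11 h00 h10 h01 h11
end

section
/- Let A be an n×n real matrix, Q a symmetric positive definite n×n matrix, C an m×n real matrix, R a symmetric positive definite m×m matrix, and p ∈ [0,1]. Let (γ_k)_{k≥1} be i.i.d. Bernoulli(p) random variables, let P₁ be a (deterministic) symmetric positive definite n×n matrix, and define the random sequence P_{k+1} = A (P_k⁻¹ + γ_k Cᵀ R⁻¹ C)⁻¹ Aᵀ + Q. Define the deterministic sequence P̄₁ = P₁, P̄_{k+1} = A P̄_k Aᵀ + Q − p · A P̄_k Cᵀ (C P̄_k Cᵀ + R)⁻¹ C P̄_k Aᵀ. Then for every k ≥ 1, E[P_k] ⪯ P̄_k in the Loewner order. -/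
/-!
By the Woodbury identity and completing the square in the gain `K`,
`A (X⁻¹ + CᵀR⁻¹C)⁻¹ Aᵀ = A X Aᵀ - A X Cᵀ (C X Cᵀ + R)⁻¹ C X Aᵀ ⪯ (A - KC) X (A - KC)ᵀ + K R Kᵀ`
for every `K`, with equality at the Kalman gain of `X`. Fix `K` to be the Kalman gain of `P̄_k`.
Then `P_{k+1} ⪯ (1 - γ_k) (A P_k Aᵀ + Q) + γ_k ((A - KC) P_k (A - KC)ᵀ + K R Kᵀ + Q)`, and the
right side is affine and monotone in `P_k`. As `P_k` is a function of `γ_1, …, γ_{k-1}`, it is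
independent of `γ_k`, so taking expectations replaces `γ_k` by `p` and `P_k` by `E[P_k] ⪯ P̄_k`;
the result is exactly `P̄_{k+1}`. Every `P_k` takes finitely many values, so all expectations exist.
-/

open Matrix MeasureTheory ProbabilityTheory
open scoped MatrixOrder

instance Matrix.instMeasurableSpace {ι κ α : Type*} [MeasurableSpace α] :
    MeasurableSpace (Matrix ι κ α) :=
  inferInstanceAs (MeasurableSpace (ι → κ → α))

instance Matrix.instBorelSpace {ι κ α : Type*} [Countable ι] [Countable κ] [TopologicalSpace α]
    [MeasurableSpace α] [SecondCountableTopology α] [BorelSpace α] :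
    BorelSpace (Matrix ι κ α) :=
  inferInstanceAs (BorelSpace (ι → κ → α))

namespace Matrix

variable {ι κ : Type*}

lemma PosSemidef.transpose_eq {X : Matrix ι ι ℝ} (hX : X.PosSemidef) : Xᵀ = X := by
  rw [← conjTranspose_eq_transpose_of_trivial, hX.1.eq]

variable [Fintype ι]

lemma measurable_nonsing_inv [DecidableEq ι] : Measurable fun X : Matrix ι ι ℝ => X⁻¹ := by
  have h : (fun X : Matrix ι ι ℝ => X⁻¹) = fun X => X.det⁻¹ • X.adjugate := by
    funext X
    rw [inv_def, Ring.inverse_eq_inv']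
  rw [h]
  exact continuous_id.matrix_det.measurable.inv.smul continuous_id.matrix_adjugate.measurable

variable [Fintype κ]

lemma PosSemidef.mul_mul_transpose_same {X : Matrix ι ι ℝ} (hX : X.PosSemidef)
    (B : Matrix κ ι ℝ) : (B * X * Bᵀ).PosSemidef := by
  simpa [conjTranspose_eq_transpose_of_trivial] using hX.mul_mul_conjTranspose_same B

lemma mul_mul_transpose_mono {X Y : Matrix ι ι ℝ} (h : X ≤ Y) (B : Matrix κ ι ℝ) :
    B * X * Bᵀ ≤ B * Y * Bᵀ := by
  rw [le_iff, ← Matrix.sub_mul, ← Matrix.mul_sub]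
  exact PosSemidef.mul_mul_transpose_same h B

end Matrix

section Kalman

variable {ι κ : Type*} [Fintype ι] [Fintype κ]

/-- The one-step predicted covariance (without process noise) of the estimator
`x̂⁺ = A x̂ + K (y - C x̂)` with an arbitrary gain `K`. -/
def josephForm (A : Matrix ι ι ℝ) (C : Matrix κ ι ℝ) (R : Matrix κ κ ℝ) (K : Matrix ι κ ℝ)
    (X : Matrix ι ι ℝ) : Matrix ι ι ℝ :=
  (A - K * C) * X * (A - K * C)ᵀ + K * R * Kᵀ

lemma josephForm_mono {X Y : Matrix ι ι ℝ} (h : X ≤ Y) (A : Matrix ι ι ℝ) (C : Matrix κ ι ℝ)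
    (R : Matrix κ κ ℝ) (K : Matrix ι κ ℝ) : josephForm A C R K X ≤ josephForm A C R K Y :=
  add_le_add_left (mul_mul_transpose_mono h _) _

variable [DecidableEq κ]

/-- The error covariance after fusing a measurement `C x + v`, `v ~ N(0, R)`, into the prior
covariance `X`. -/
noncomputable def posteriorCov (C : Matrix κ ι ℝ) (R : Matrix κ κ ℝ) (X : Matrix ι ι ℝ) :
    Matrix ι ι ℝ :=
  X - X * Cᵀ * (C * X * Cᵀ + R)⁻¹ * C * X

noncomputable def kalmanGain (A : Matrix ι ι ℝ) (C : Matrix κ ι ℝ) (R : Matrix κ κ ℝ)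
    (X : Matrix ι ι ℝ) : Matrix ι κ ℝ :=
  A * X * Cᵀ * (C * X * Cᵀ + R)⁻¹

/-- Completing the square in the gain `K`. -/
lemma josephForm_eq {X : Matrix ι ι ℝ} (hX : X.PosSemidef) {R : Matrix κ κ ℝ} (hR : R.PosDef)
    (A : Matrix ι ι ℝ) (C : Matrix κ ι ℝ) (K : Matrix ι κ ℝ) :
    josephForm A C R K X = A * posteriorCov C R X * Aᵀ
      + (K - kalmanGain A C R X) * (C * X * Cᵀ + R) * (K - kalmanGain A C R X)ᵀ := by
  have hS : (C * X * Cᵀ + R).PosDef := PosDef.posSemidef_add (hX.mul_mul_transpose_same C) hR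
  have hSinv : (C * X * Cᵀ + R)⁻¹ᵀ = (C * X * Cᵀ + R)⁻¹ := by
    rw [transpose_nonsing_inv, hS.posSemidef.transpose_eq]
  have := hS.isUnit.invertible
  unfold josephForm posteriorCov kalmanGain
  set S := C * X * Cᵀ + R with hSdef
  have hRS : R = S - C * X * Cᵀ := by rw [hSdef]; abel
  rw [hRS]
  simp only [transpose_sub, transpose_mul, transpose_transpose, hX.transpose_eq, hSinv,
    Matrix.mul_sub, Matrix.sub_mul, Matrix.mul_assoc, mul_inv_cancel_left_of_invertible,
    inv_mul_cancel_left_of_invertible]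
  abel

lemma mul_posteriorCov_mul_le_josephForm {X : Matrix ι ι ℝ} (hX : X.PosSemidef)
    {R : Matrix κ κ ℝ} (hR : R.PosDef) (A : Matrix ι ι ℝ) (C : Matrix κ ι ℝ)
    (K : Matrix ι κ ℝ) : A * posteriorCov C R X * Aᵀ ≤ josephForm A C R K X := by
  rw [josephForm_eq hX hR, le_iff, add_sub_cancel_left]
  exact (PosDef.posSemidef_add (hX.mul_mul_transpose_same C) hR).posSemidef
    |>.mul_mul_transpose_same _

lemma josephForm_kalmanGain {X : Matrix ι ι ℝ} (hX : X.PosSemidef) {R : Matrix κ κ ℝ}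
    (hR : R.PosDef) (A : Matrix ι ι ℝ) (C : Matrix κ ι ℝ) :
    josephForm A C R (kalmanGain A C R X) X = A * posteriorCov C R X * Aᵀ := by
  rw [josephForm_eq hX hR, sub_self, Matrix.zero_mul, Matrix.zero_mul, add_zero]

lemma modifiedRiccati_eq (p : ℝ) (A Q : Matrix ι ι ℝ) (C : Matrix κ ι ℝ) (R : Matrix κ κ ℝ)
    (Y : Matrix ι ι ℝ) :
    A * Y * Aᵀ + Q - p • (A * Y * Cᵀ * (C * Y * Cᵀ + R)⁻¹ * C * Y * Aᵀ)
      = (1 - p) • (A * Y * Aᵀ + Q) + p • (A * posteriorCov C R Y * Aᵀ + Q) := by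
  simp only [posteriorCov, Matrix.mul_sub, Matrix.sub_mul, Matrix.mul_assoc]
  module

variable [DecidableEq ι]

/-- The Woodbury identity. -/
lemma inv_add_eq_posteriorCov {X : Matrix ι ι ℝ} (hX : X.PosDef) {R : Matrix κ κ ℝ}
    (hR : R.PosDef) (C : Matrix κ ι ℝ) : (X⁻¹ + Cᵀ * R⁻¹ * C)⁻¹ = posteriorCov C R X := by
  have hS : (C * X * Cᵀ + R).PosDef :=
    PosDef.posSemidef_add (hX.posSemidef.mul_mul_transpose_same C) hR
  have := hX.isUnit.invertible
  have := hR.isUnit.invertible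
  have h := add_mul_mul_inv_eq_sub X⁻¹ Cᵀ R⁻¹ C hX.inv.isUnit hR.inv.isUnit
  simp only [inv_inv_of_invertible, add_comm R] at h
  rw [h hS.isUnit, posteriorCov, Matrix.mul_assoc]

/-- One step of the predicted covariance when the measurement arrives (`g = 1`) or is
lost (`g = 0`). -/
noncomputable def intermittentStep (A Q : Matrix ι ι ℝ) (C : Matrix κ ι ℝ) (R : Matrix κ κ ℝ)
    (X : Matrix ι ι ℝ) (g : ℝ) : Matrix ι ι ℝ :=
  A * (X⁻¹ + g • (Cᵀ * R⁻¹ * C))⁻¹ * Aᵀ + Q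

lemma measurable_intermittentStep (A Q : Matrix ι ι ℝ) (C : Matrix κ ι ℝ) (R : Matrix κ κ ℝ) :
    Measurable (Function.uncurry (intermittentStep A Q C R)) := by
  have hcongr : Continuous fun Y : Matrix ι ι ℝ => A * Y * Aᵀ + Q := by fun_prop
  have hinfo : Continuous fun x : Matrix ι ι ℝ × ℝ => x.1 + x.2 • (Cᵀ * R⁻¹ * C) := by fun_prop
  exact hcongr.measurable.comp <| measurable_nonsing_inv.comp <|
    hinfo.measurable.comp (measurable_nonsing_inv.prodMap measurable_id)

lemma posDef_intermittentStep {X : Matrix ι ι ℝ} (hX : X.PosDef) (A : Matrix ι ι ℝ)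
    {Q : Matrix ι ι ℝ} (hQ : Q.PosDef) (C : Matrix κ ι ℝ) {R : Matrix κ κ ℝ} (hR : R.PosDef)
    {g : ℝ} (hg : 0 ≤ g) : (intermittentStep A Q C R X g).PosDef := by
  have hinfo : (X⁻¹ + g • (Cᵀ * R⁻¹ * C)).PosDef :=
    hX.inv.add_posSemidef ((hR.inv.posSemidef.mul_mul_transpose_same Cᵀ).smul hg)
  exact PosDef.posSemidef_add (hinfo.inv.posSemidef.mul_mul_transpose_same A) hQ

lemma intermittentStep_le {X : Matrix ι ι ℝ} (hX : X.PosDef) (A Q : Matrix ι ι ℝ)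
    (C : Matrix κ ι ℝ) {R : Matrix κ κ ℝ} (hR : R.PosDef) (K : Matrix ι κ ℝ) {g : ℝ}
    (hg : g = 0 ∨ g = 1) :
    intermittentStep A Q C R X g ≤ (1 - g) • (A * X * Aᵀ + Q) + g • (josephForm A C R K X + Q) := by
  have := hX.isUnit.invertible
  rcases hg with rfl | rfl
  · simp [intermittentStep, inv_inv_of_invertible]
  · simp only [intermittentStep, one_smul, sub_self, zero_smul, zero_add,
      inv_add_eq_posteriorCov hX hR]
    exact add_le_add_left (mul_posteriorCov_mul_le_josephForm hX.posSemidef hR A C K) Q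

end Kalman

lemma integrable_comp_of_finite_range {Ω β : Type*} [MeasurableSpace Ω] [MeasurableSpace β]
    {μ : Measure Ω} [IsFiniteMeasure μ] {Y : Ω → β} (hY : Measurable Y)
    (hfin : (Set.range Y).Finite) {Φ : β → ℝ} (hΦ : Measurable Φ) :
    Integrable (fun ω => Φ (Y ω)) μ := by
  obtain ⟨B, hB⟩ := (hfin.image fun y => ‖Φ y‖).bddAbove
  exact .of_bound (hΦ.comp hY).aestronglyMeasurable B
    (ae_of_all _ fun ω => hB ⟨Y ω, ⟨ω, rfl⟩, rfl⟩)

lemma integral_eq_of_forall_eq_zero_or_one {Ω : Type*} [MeasurableSpace Ω] {μ : Measure Ω}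
    {g : Ω → ℝ} (hgm : Measurable g) (hg : ∀ ω, g ω = 0 ∨ g ω = 1) {p : ℝ} (hp : 0 ≤ p)
    (hgp : μ {ω | g ω = 1} = ENNReal.ofReal p) : ∫ ω, g ω ∂μ = p := by
  have hg_eq : g = {ω | g ω = 1}.indicator 1 := by
    funext ω
    rcases hg ω with h | h <;> simp [h]
  rw [hg_eq, integral_indicator_one (s := {ω | g ω = 1}) (hgm (measurableSet_singleton 1)),
    measureReal_def, hgp, ENNReal.toReal_ofReal hp]

section MatrixIntegral

variable {Ω ι κ : Type*} [MeasurableSpace Ω] {μ : Measure Ω}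

noncomputable def matrixIntegral (μ : Measure Ω) (f : Ω → Matrix ι κ ℝ) : Matrix ι κ ℝ :=
  of fun i j => ∫ ω, f ω i j ∂μ

lemma matrixIntegral_const [IsProbabilityMeasure μ] (M : Matrix ι κ ℝ) :
    matrixIntegral μ (fun _ => M) = M := by
  ext i j
  simp [matrixIntegral]

lemma matrixIntegral_add {f g : Ω → Matrix ι κ ℝ} (hf : ∀ i j, Integrable (fun ω => f ω i j) μ)
    (hg : ∀ i j, Integrable (fun ω => g ω i j) μ) :
    matrixIntegral μ (fun ω => f ω + g ω) = matrixIntegral μ f + matrixIntegral μ g := by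
  ext i j
  exact integral_add (hf i j) (hg i j)

lemma matrixIntegral_sub {f g : Ω → Matrix ι κ ℝ} (hf : ∀ i j, Integrable (fun ω => f ω i j) μ)
    (hg : ∀ i j, Integrable (fun ω => g ω i j) μ) :
    matrixIntegral μ (fun ω => f ω - g ω) = matrixIntegral μ f - matrixIntegral μ g := by
  ext i j
  exact integral_sub (hf i j) (hg i j)

lemma matrixIntegral_mul_mul_add [IsProbabilityMeasure μ] [Fintype ι] [Fintype κ]
    {ι' κ' : Type*} (U : Matrix ι' ι ℝ) (V : Matrix κ κ' ℝ) (W : Matrix ι' κ' ℝ) {f : Ω → Matrix ι κ ℝ}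
    (hf : ∀ i j, Integrable (fun ω => f ω i j) μ) :
    matrixIntegral μ (fun ω => U * f ω * V + W) = U * matrixIntegral μ f * V + W := by
  ext i j
  have hint : ∀ s t, Integrable (fun ω => U i s * f ω s t * V t j) μ :=
    fun s t => ((hf s t).const_mul _).mul_const _
  simp only [matrixIntegral, of_apply, Matrix.add_apply, Matrix.mul_apply, Finset.sum_mul]
  rw [integral_add (integrable_finsetSum _ fun t _ => integrable_finsetSum _ fun s _ => hint s t)
      (integrable_const _), integral_const, probReal_univ, one_smul,
    integral_finsetSum _ fun t _ => integrable_finsetSum _ fun s _ => hint s t]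
  congr 1
  refine Finset.sum_congr rfl fun t _ => ?_
  rw [integral_finsetSum _ fun s _ => hint s t]
  refine Finset.sum_congr rfl fun s _ => ?_
  rw [integral_mul_const, integral_const_mul]

lemma matrixIntegral_smul_of_indepFun {g : Ω → ℝ} {M : Ω → Matrix ι κ ℝ}
    (hind : IndepFun g M μ) (hg : AEStronglyMeasurable g μ) (hM : Measurable M) :
    matrixIntegral μ (fun ω => g ω • M ω) = (∫ ω, g ω ∂μ) • matrixIntegral μ M := by
  ext i j
  have hentry : Measurable fun X : Matrix ι κ ℝ => X i j := by fun_prop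
  exact (hind.comp measurable_id hentry).integral_fun_mul_eq_mul_integral hg
    (hentry.comp hM).aestronglyMeasurable

lemma matrixIntegral_mix_of_indepFun {β : Type*} [MeasurableSpace β] [IsProbabilityMeasure μ]
    {g : Ω → ℝ} {X : Ω → β} (hind : IndepFun g X μ) (hgm : Measurable g) (hg : Integrable g μ)
    (hXm : Measurable X) {F G : β → Matrix ι κ ℝ} (hF : Measurable F) (hG : Measurable G)
    (hFint : ∀ i j, Integrable (fun ω => ((1 - g ω) • F (X ω)) i j) μ)
    (hGint : ∀ i j, Integrable (fun ω => (g ω • G (X ω)) i j) μ) :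
    matrixIntegral μ (fun ω => (1 - g ω) • F (X ω) + g ω • G (X ω))
      = (1 - ∫ ω, g ω ∂μ) • matrixIntegral μ (fun ω => F (X ω))
        + (∫ ω, g ω ∂μ) • matrixIntegral μ (fun ω => G (X ω)) := by
  rw [matrixIntegral_add hFint hGint,
    matrixIntegral_smul_of_indepFun (g := fun ω => 1 - g ω) (M := fun ω => F (X ω))
      (hind.comp (measurable_const.sub measurable_id) hF)
      (measurable_const.sub hgm).aestronglyMeasurable (hF.comp hXm),
    matrixIntegral_smul_of_indepFun (g := g) (M := fun ω => G (X ω)) (hind.comp measurable_id hG)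
      hgm.aestronglyMeasurable (hG.comp hXm),
    integral_sub (integrable_const 1) hg, integral_const, probReal_univ, one_smul]

variable [Fintype ι]

lemma posSemidef_matrixIntegral {f : Ω → Matrix ι ι ℝ} (hf : ∀ ω, (f ω).PosSemidef)
    (hint : ∀ i j, Integrable (fun ω => f ω i j) μ) : (matrixIntegral μ f).PosSemidef := by
  have hquad : ∀ (M : Matrix ι ι ℝ) (x : ι → ℝ),
      star x ⬝ᵥ (M *ᵥ x) = ∑ i, ∑ j, x i * x j * M i j := by
    intro M x
    simp only [dotProduct, mulVec, star_trivial, Finset.mul_sum]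
    exact Finset.sum_congr rfl fun i _ => Finset.sum_congr rfl fun j _ => by ring
  rw [posSemidef_iff_dotProduct_mulVec]
  refine ⟨?_, fun x => ?_⟩
  · ext i j
    exact integral_congr_ae (ae_of_all _ fun ω => (hf ω).1.apply i j)
  · have hint' : ∀ i j, Integrable (fun ω => x i * x j * f ω i j) μ :=
      fun i j => (hint i j).const_mul _
    rw [hquad]
    simp only [matrixIntegral, of_apply, ← integral_const_mul]
    simp only [← integral_finsetSum _ fun j _ => hint' _ j]
    rw [← integral_finsetSum _ fun i _ => integrable_finsetSum _ fun j _ => hint' i j]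
    exact integral_nonneg fun ω => hquad (f ω) x ▸ (hf ω).dotProduct_mulVec_nonneg x

lemma matrixIntegral_mono {f g : Ω → Matrix ι ι ℝ} (hfg : ∀ ω, f ω ≤ g ω)
    (hf : ∀ i j, Integrable (fun ω => f ω i j) μ) (hg : ∀ i j, Integrable (fun ω => g ω i j) μ) :
    matrixIntegral μ f ≤ matrixIntegral μ g := by
  rw [le_iff, ← matrixIntegral_sub hg hf]
  exact posSemidef_matrixIntegral hfg fun i j => (hg i j).sub (hf i j)

end MatrixIntegral

section RandomRecursion

variable {Ω β E : Type*} {γ : ℕ → Ω → E} {X : ℕ → Ω → β} {f : β → E → β} {x₁ : β}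

lemma forall_mem_of_recursion (hX1 : ∀ ω, X 1 ω = x₁)
    (hrec : ∀ k, 1 ≤ k → ∀ ω, X (k + 1) ω = f (X k ω) (γ k ω)) {S : Set β} {G : Set E}
    (hx₁ : x₁ ∈ S) (hf : ∀ x ∈ S, ∀ g ∈ G, f x g ∈ S) (hγ : ∀ k, 1 ≤ k → ∀ ω, γ k ω ∈ G) :
    ∀ k, 1 ≤ k → ∀ ω, X k ω ∈ S := by
  intro k hk
  induction k, hk using Nat.le_induction with
  | base => exact fun ω => hX1 ω ▸ hx₁
  | succ k hk ih => exact fun ω => (hrec k hk ω).symm ▸ hf _ (ih ω) _ (hγ k hk ω)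

lemma finite_range_of_recursion (hX1 : ∀ ω, X 1 ω = x₁)
    (hrec : ∀ k, 1 ≤ k → ∀ ω, X (k + 1) ω = f (X k ω) (γ k ω))
    (hγ : ∀ k, 1 ≤ k → (Set.range (γ k)).Finite) : ∀ k, 1 ≤ k → (Set.range (X k)).Finite := by
  intro k hk
  induction k, hk using Nat.le_induction with
  | base => exact (Set.finite_singleton x₁).subset (Set.range_subset_iff.2 hX1)
  | succ k hk ih =>
    refine ((ih.prod (hγ k hk)).image (Function.uncurry f)).subset ?_
    rintro _ ⟨ω, rfl⟩
    exact ⟨(X k ω, γ k ω), ⟨⟨ω, rfl⟩, ⟨ω, rfl⟩⟩, (hrec k hk ω).symm⟩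

variable [MeasurableSpace β] [mE : MeasurableSpace E]

lemma measurable_iSup_of_recursion (hX1 : ∀ ω, X 1 ω = x₁)
    (hrec : ∀ k, 1 ≤ k → ∀ ω, X (k + 1) ω = f (X k ω) (γ k ω))
    (hf : Measurable (Function.uncurry f)) :
    ∀ k, 1 ≤ k → Measurable[⨆ j ∈ {j : {j : ℕ // 1 ≤ j} | j.1 < k}, mE.comap (γ j)] (X k) := by
  intro k hk
  induction k, hk using Nat.le_induction with
  | base =>
    rw [funext hX1]
    exact measurable_const
  | succ k hk ih =>
    rw [funext (hrec k hk)]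
    refine hf.comp (Measurable.prodMk (ih.mono ?_ le_rfl) ((comap_measurable (γ k)).mono ?_ le_rfl))
    · exact biSup_mono fun j hj => Nat.lt_succ_of_lt hj
    · exact le_iSup₂ (f := fun j (_ : j ∈ {j : {j : ℕ // 1 ≤ j} | j.1 < k + 1}) =>
        mE.comap (γ j)) ⟨k, hk⟩ (Nat.lt_succ_self k)

variable [MeasurableSpace Ω]

lemma measurable_of_recursion (hγm : ∀ k, 1 ≤ k → Measurable (γ k)) (hX1 : ∀ ω, X 1 ω = x₁)
    (hrec : ∀ k, 1 ≤ k → ∀ ω, X (k + 1) ω = f (X k ω) (γ k ω))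
    (hf : Measurable (Function.uncurry f)) (k : ℕ) (hk : 1 ≤ k) : Measurable (X k) :=
  (measurable_iSup_of_recursion hX1 hrec hf k hk).mono
    (iSup₂_le fun j _ => (hγm j.1 j.2).comap_le) le_rfl

lemma indepFun_of_recursion {μ : Measure Ω} (hγm : ∀ k, 1 ≤ k → Measurable (γ k))
    (hind : iIndepFun (fun k : {k : ℕ // 1 ≤ k} => γ k.1) μ) (hX1 : ∀ ω, X 1 ω = x₁)
    (hrec : ∀ k, 1 ≤ k → ∀ ω, X (k + 1) ω = f (X k ω) (γ k ω))
    (hf : Measurable (Function.uncurry f)) (k : ℕ) (hk : 1 ≤ k) : IndepFun (γ k) (X k) μ := by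
  rw [IndepFun_iff_Indep]
  have hsplit := indep_iSup_of_disjoint (fun j : {j : ℕ // 1 ≤ j} => (hγm j.1 j.2).comap_le)
    hind.iIndep (S := {⟨k, hk⟩}) (T := {j | j.1 < k}) (by simp)
  exact indep_of_indep_of_le hsplit
    (le_iSup₂ (f := fun j (_ : j ∈ ({⟨k, hk⟩} : Set {j : ℕ // 1 ≤ j})) => mE.comap (γ j))
      ⟨k, hk⟩ rfl)
    (measurable_iSup_of_recursion hX1 hrec hf k hk).comap_le

end RandomRecursion

theorem matrixIntegral_intermittentStep_le_josephForm {Ω ι κ : Type*} [MeasurableSpace Ω]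
    {μ : Measure Ω} [IsProbabilityMeasure μ] [Fintype ι] [DecidableEq ι] [Fintype κ]
    [DecidableEq κ] (A Q : Matrix ι ι ℝ) (C : Matrix κ ι ℝ) {R : Matrix κ κ ℝ} (hR : R.PosDef)
    (K : Matrix ι κ ℝ) {X : Ω → Matrix ι ι ℝ} (hX : ∀ ω, (X ω).PosDef) (hXm : Measurable X)
    (hXfin : (Set.range X).Finite) {g : Ω → ℝ} (hg : ∀ ω, g ω = 0 ∨ g ω = 1)
    (hgm : Measurable g) (hind : IndepFun g X μ) :
    matrixIntegral μ (fun ω => intermittentStep A Q C R (X ω) (g ω))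
      ≤ (1 - ∫ ω, g ω ∂μ) • (A * matrixIntegral μ X * Aᵀ + Q)
        + (∫ ω, g ω ∂μ) • (josephForm A C R K (matrixIntegral μ X) + Q) := by
  have hpair : (Set.range fun ω => (X ω, g ω)).Finite := by
    refine (hXfin.prod ((Set.finite_singleton 1).insert 0)).subset ?_
    rintro _ ⟨ω, rfl⟩
    exact ⟨⟨ω, rfl⟩, hg ω⟩
  have hint : ∀ Φ : Matrix ι ι ℝ × ℝ → ℝ, Measurable Φ →
      Integrable (fun ω => Φ (X ω, g ω)) μ :=
    fun Φ => integrable_comp_of_finite_range (hXm.prodMk hgm) hpair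
  have hXint : ∀ i j, Integrable (fun ω => X ω i j) μ := fun i j =>
    hint (fun x => x.1 i j) (Continuous.measurable (by fun_prop))
  have hF : Continuous fun Y : Matrix ι ι ℝ => A * Y * Aᵀ + Q := by fun_prop
  have hG : Continuous fun Y => josephForm A C R K Y + Q := by unfold josephForm; fun_prop
  calc matrixIntegral μ (fun ω => intermittentStep A Q C R (X ω) (g ω))
      ≤ matrixIntegral μ (fun ω => (1 - g ω) • (A * X ω * Aᵀ + Q)
          + g ω • (josephForm A C R K (X ω) + Q)) := by
        refine matrixIntegral_mono (fun ω => intermittentStep_le (hX ω) A Q C hR K (hg ω))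
          (fun i j => hint (fun x => intermittentStep A Q C R x.1 x.2 i j) ?_)
          (fun i j => hint (fun x => ((1 - x.2) • (A * x.1 * Aᵀ + Q)
            + x.2 • (josephForm A C R K x.1 + Q)) i j)
            (Continuous.measurable (by unfold josephForm; fun_prop)))
        exact (by fun_prop : Measurable fun M : Matrix ι ι ℝ => M i j).comp
          (measurable_intermittentStep A Q C R)
    _ = (1 - ∫ ω, g ω ∂μ) • matrixIntegral μ (fun ω => A * X ω * Aᵀ + Q)
          + (∫ ω, g ω ∂μ) • matrixIntegral μ (fun ω => josephForm A C R K (X ω) + Q) :=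
        matrixIntegral_mix_of_indepFun hind hgm (hint (fun x => x.2) measurable_snd) hXm
          hF.measurable hG.measurable
          (fun i j => hint (fun x => ((1 - x.2) • (A * x.1 * Aᵀ + Q)) i j)
            (Continuous.measurable (by fun_prop)))
          (fun i j => hint (fun x => (x.2 • (josephForm A C R K x.1 + Q)) i j)
            (Continuous.measurable (by unfold josephForm; fun_prop)))
    _ = _ := by
        simp only [josephForm, add_assoc]
        rw [matrixIntegral_mul_mul_add _ _ _ hXint, matrixIntegral_mul_mul_add _ _ _ hXint]

theorem matrixIntegral_intermittentStep_le {Ω ι κ : Type*} [MeasurableSpace Ω] {μ : Measure Ω}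
    [IsProbabilityMeasure μ] [Fintype ι] [DecidableEq ι] [Fintype κ] [DecidableEq κ]
    (A Q : Matrix ι ι ℝ) (C : Matrix κ ι ℝ) {R : Matrix κ κ ℝ} (hR : R.PosDef)
    {X : Ω → Matrix ι ι ℝ} (hX : ∀ ω, (X ω).PosDef) (hXm : Measurable X)
    (hXfin : (Set.range X).Finite) {g : Ω → ℝ} (hg : ∀ ω, g ω = 0 ∨ g ω = 1) (hgm : Measurable g)
    (hind : IndepFun g X μ) {p : ℝ} (hp : p ∈ Set.Icc (0 : ℝ) 1) (hgp : ∫ ω, g ω ∂μ = p)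
    {Y : Matrix ι ι ℝ} (hXY : matrixIntegral μ X ≤ Y) :
    matrixIntegral μ (fun ω => intermittentStep A Q C R (X ω) (g ω))
      ≤ (1 - p) • (A * Y * Aᵀ + Q) + p • (A * posteriorCov C R Y * Aᵀ + Q) := by
  have hXint : ∀ i j, Integrable (fun ω => X ω i j) μ := fun i j =>
    integrable_comp_of_finite_range hXm hXfin (Φ := fun M => M i j) (by fun_prop)
  have hY : Y.PosSemidef :=
    ((posSemidef_matrixIntegral (fun ω => (hX ω).posSemidef) hXint).nonneg.trans hXY).posSemidef
  set K := kalmanGain A C R Y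
  calc matrixIntegral μ (fun ω => intermittentStep A Q C R (X ω) (g ω))
      ≤ (1 - p) • (A * matrixIntegral μ X * Aᵀ + Q)
          + p • (josephForm A C R K (matrixIntegral μ X) + Q) :=
        hgp ▸ matrixIntegral_intermittentStep_le_josephForm A Q C hR K hX hXm hXfin hg hgm hind
    _ ≤ (1 - p) • (A * Y * Aᵀ + Q) + p • (josephForm A C R K Y + Q) :=
        add_le_add
          (smul_le_smul_of_nonneg_left (add_le_add_left (mul_mul_transpose_mono hXY A) Q)
            (sub_nonneg.2 hp.2))
          (smul_le_smul_of_nonneg_left (add_le_add_left (josephForm_mono hXY A C R K) Q) hp.1)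
    _ = (1 - p) • (A * Y * Aᵀ + Q) + p • (A * posteriorCov C R Y * Aᵀ + Q) := by
        rw [josephForm_kalmanGain hY hR]

/-- (Lemma 1, key step.) For the Kalman filter with i.i.d.
Bernoulli(`p`) packet arrivals `(γ_k)_{k≥1}` and random predicted error covariance
`P_{k+1} = A (P_k⁻¹ + γ_k CᵀR⁻¹C)⁻¹ Aᵀ + Q`, the entrywise expectation `E[P_k]`
is dominated, in the Loewner order, by the deterministic modified Riccati sequence
`P̄_{k+1} = A P̄_k Aᵀ + Q − p·A P̄_k Cᵀ(C P̄_k Cᵀ + R)⁻¹ C P̄_k Aᵀ`, `P̄₁ = P₁`. -/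
theorem stmt_17 {n m : ℕ}
    (A Q : Matrix (Fin n) (Fin n) ℝ) (hQ : Q.PosDef)
    (C : Matrix (Fin m) (Fin n) ℝ)
    (R : Matrix (Fin m) (Fin m) ℝ) (hR : R.PosDef)
    (p : ℝ) (hp : p ∈ Set.Icc (0:ℝ) 1)
    {Ω : Type*} [MeasurableSpace Ω] (μ : Measure Ω) [IsProbabilityMeasure μ]
    (γ : ℕ → Ω → ℝ)
    (hγmeas : ∀ k, 1 ≤ k → Measurable (γ k))
    (hγval : ∀ k, 1 ≤ k → ∀ ω, γ k ω = 0 ∨ γ k ω = 1)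
    (hγbern : ∀ k, 1 ≤ k → μ {ω | γ k ω = 1} = ENNReal.ofReal p)
    (hγindep : iIndepFun
      (fun k : {k : ℕ // 1 ≤ k} => γ k.1) μ)
    (P1 : Matrix (Fin n) (Fin n) ℝ) (hP1 : P1.PosDef)
    (P : ℕ → Ω → Matrix (Fin n) (Fin n) ℝ)
    (hPinit : ∀ ω, P 1 ω = P1)
    (hPrec : ∀ k, 1 ≤ k → ∀ ω,
      P (k + 1) ω = A * ((P k ω)⁻¹ + γ k ω • (Cᵀ * R⁻¹ * C))⁻¹ * Aᵀ + Q)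
    (Pbar : ℕ → Matrix (Fin n) (Fin n) ℝ)
    (hPbarinit : Pbar 1 = P1)
    (hPbarrec : ∀ k, 1 ≤ k →
      Pbar (k + 1) = A * Pbar k * Aᵀ + Q
        - p • (A * Pbar k * Cᵀ * (C * Pbar k * Cᵀ + R)⁻¹ * C * Pbar k * Aᵀ)) :
    ∀ k, 1 ≤ k →
      (Pbar k - Matrix.of fun i j => ∫ ω, P k ω i j ∂μ).PosSemidef := by
  have hγfin : ∀ k, 1 ≤ k → (Set.range (γ k)).Finite := fun k hk =>
    ((Set.finite_singleton 1).insert 0).subset (Set.range_subset_iff.2 (hγval k hk))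
  have hrec : ∀ k, 1 ≤ k → ∀ ω, P (k + 1) ω = intermittentStep A Q C R (P k ω) (γ k ω) := hPrec
  have hPpos : ∀ k, 1 ≤ k → ∀ ω, (P k ω).PosDef :=
    forall_mem_of_recursion (S := {X | X.PosDef}) (G := {0, 1}) hPinit hrec hP1
      (fun X hX g hg => posDef_intermittentStep hX A hQ C hR (by rcases hg with rfl | rfl <;> simp))
      hγval
  have hmeas := measurable_intermittentStep A Q C R
  suffices h : ∀ k, 1 ≤ k → matrixIntegral μ (P k) ≤ Pbar k from h
  intro k hk
  induction k, hk using Nat.le_induction with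
  | base => rw [hPbarinit, funext hPinit, matrixIntegral_const]
  | succ k hk ih =>
    rw [hPbarrec k hk, modifiedRiccati_eq, funext (hPrec k hk)]
    exact matrixIntegral_intermittentStep_le A Q C hR (hPpos k hk)
      (measurable_of_recursion hγmeas hPinit hrec hmeas k hk)
      (finite_range_of_recursion hPinit hrec hγfin k hk) (hγval k hk) (hγmeas k hk)
      (indepFun_of_recursion hγmeas hγindep hPinit hrec hmeas k hk) hp
      (integral_eq_of_forall_eq_zero_or_one (hγmeas k hk) (hγval k hk) hp.1 (hγbern k hk)) ih
end
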